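/- Let 𝔅 be a bornology with closed base on a metric space X. If {𝒰ₙ : n ∈ ℕ} is a sequence of γ_{𝔅ˢ}-covers with 𝒰ₙ = {Uⱼⁿ : j ∈ ℕ}, then 𝒱ₙ = {U¹_k ∩ U²_k ∩ ⋯ ∩ Uⁿ_k : k ∈ ℕ} (diagonal intersections with the same index k) is a γ_{𝔅ˢ}-cover of X for each n. -/

import Mathlib

open Set Metric Filter

/-- A bornology on a metric space: an ideal of subsets covering `X`. -/
structure BornologyOn (X : Type*) [MetricSpace X] where
  sets : Set (Set X)
  union_mem : ∀ {A B : Set X}, A ∈ sets → B ∈ sets → A ∪ B ∈ sets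
  subset_mem : ∀ {A B : Set X}, A ∈ sets → B ⊆ A → B ∈ sets
  covers : ∀ x : X, ∃ A ∈ sets, x ∈ A

variable {X : Type*} [MetricSpace X]

/-- `𝔅` has a closed base: a cofinal subfamily consisting of closed sets. -/
def HasClosedBase (𝔅 : BornologyOn X) : Prop :=
  ∃ base ⊆ 𝔅.sets, (∀ C ∈ base, IsClosed C) ∧ ∀ A ∈ 𝔅.sets, ∃ C ∈ base, A ⊆ C

/-- The `δ`-enlargement `B^δ = ⋃_{x ∈ B} S(x, δ)`. -/
def enlarge (B : Set X) (δ : ℝ) : Set X := ⋃ x ∈ B, ball x δ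

/-- A `𝔅ˢ`-cover: `X ∉ 𝒰` and every `B ∈ 𝔅` has `B^δ ⊆ U` for some `U ∈ 𝒰`, `δ > 0`. -/
def IsBCover (𝔅 : BornologyOn X) (𝒰 : Set (Set X)) : Prop :=
  univ ∉ 𝒰 ∧ ∀ B ∈ 𝔅.sets, ∃ U ∈ 𝒰, ∃ δ > 0, enlarge B δ ⊆ U

/-- An open `𝔅ˢ`-cover. -/
def IsOpenBCover (𝔅 : BornologyOn X) (𝒰 : Set (Set X)) : Prop :=
  (∀ U ∈ 𝒰, IsOpen U) ∧ (∀ x : X, ∃ U ∈ 𝒰, x ∈ U) ∧ IsBCover 𝔅 𝒰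

/-- A `γ_{𝔅ˢ}`-cover (set form): infinite family of open sets such that for each `B ∈ 𝔅`
all but finitely many members contain some enlargement of `B`. -/
def IsGammaBCover (𝔅 : BornologyOn X) (𝒰 : Set (Set X)) : Prop :=
  𝒰.Infinite ∧ (∀ U ∈ 𝒰, IsOpen U) ∧
    ∀ B ∈ 𝔅.sets, {U ∈ 𝒰 | ¬ ∃ δ > 0, enlarge B δ ⊆ U}.Finite

/-- A `γ_{𝔅ˢ}`-cover given as a sequence `{Uₙ}`: infinite, open, and for each `B ∈ 𝔅`
there are `n₀` and `δₙ > 0` with `B^{δₙ} ⊆ Uₙ` for all `n ≥ n₀`. -/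
def IsGammaBSeq (𝔅 : BornologyOn X) (U : ℕ → Set X) : Prop :=
  (Set.range U).Infinite ∧ (∀ n, IsOpen (U n)) ∧
    ∀ B ∈ 𝔅.sets, ∃ n₀, ∀ n ≥ n₀, ∃ δ > 0, enlarge B δ ⊆ U n

/-- A `γ`-cover: infinite family of open sets, every point in all but finitely many members. -/
def IsGammaCover (𝒰 : Set (Set X)) : Prop :=
  𝒰.Infinite ∧ (∀ U ∈ 𝒰, IsOpen U) ∧ ∀ x : X, {U ∈ 𝒰 | x ∉ U}.Finite

/-- An open cover of `X`. -/
def IsOpenCover (𝒰 : Set (Set X)) : Prop :=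
  (∀ U ∈ 𝒰, IsOpen U) ∧ ∀ x : X, ∃ U ∈ 𝒰, x ∈ U

/-- The family `𝒪_{𝔅ˢ}` of countable open `𝔅ˢ`-covers. -/
def OBs (𝔅 : BornologyOn X) : Set (Set (Set X)) :=
  {𝒰 | 𝒰.Countable ∧ IsOpenBCover 𝔅 𝒰}

/-- The family `Γ_{𝔅ˢ}` of countable `γ_{𝔅ˢ}`-covers. -/
def GBs (𝔅 : BornologyOn X) : Set (Set (Set X)) :=
  {𝒰 | 𝒰.Countable ∧ IsGammaBCover 𝔅 𝒰}

/-- The family `𝒪` of countable open covers. -/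
def Ocov (X : Type*) [MetricSpace X] : Set (Set (Set X)) :=
  {𝒰 | 𝒰.Countable ∧ IsOpenCover 𝒰}

/-- The selection principle `S₁(𝒜, ℬ)`. -/
def S1 (𝒜 ℬ : Set (Set (Set X))) : Prop :=
  ∀ 𝒰 : ℕ → Set (Set X), (∀ n, 𝒰 n ∈ 𝒜) →
    ∃ sel : ℕ → Set X, (∀ n, sel n ∈ 𝒰 n) ∧ Set.range sel ∈ ℬ

/-- The selection principle `S_fin(𝒜, ℬ)`. -/
def Sfin (𝒜 ℬ : Set (Set (Set X))) : Prop :=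
  ∀ 𝒰 : ℕ → Set (Set X), (∀ n, 𝒰 n ∈ 𝒜) →
    ∃ 𝒱 : ℕ → Set (Set X), (∀ n, 𝒱 n ⊆ 𝒰 n ∧ (𝒱 n).Finite) ∧ (⋃ n, 𝒱 n) ∈ ℬ

/-- The selection principle `U_fin(𝒜, ℬ)`. -/
def Ufin (𝒜 ℬ : Set (Set (Set X))) : Prop :=
  ∀ 𝒰 : ℕ → Set (Set X), (∀ n, 𝒰 n ∈ 𝒜) →
    ∃ 𝒱 : ℕ → Set (Set X), (∀ n, 𝒱 n ⊆ 𝒰 n ∧ (𝒱 n).Finite) ∧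
      ((Set.range fun n => ⋃₀ 𝒱 n) ∈ ℬ ∨ ∃ n, ⋃₀ 𝒱 n = univ)

/-- ONE has a winning strategy in `G₁(𝒜, ℬ)`. -/
def OneWinsG1 (𝒜 ℬ : Set (Set (Set X))) : Prop :=
  ∃ σ : List (Set X) → Set (Set X),
    (∀ h, σ h ∈ 𝒜) ∧
    ∀ play : ℕ → Set X,
      (∀ n, play n ∈ σ (List.ofFn fun i : Fin n => play i.1)) →
      Set.range play ∉ ℬ

/-- ONE has a winning strategy in `G_fin(𝒜, ℬ)`. -/
def OneWinsGfin (𝒜 ℬ : Set (Set (Set X))) : Prop :=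
  ∃ σ : List (Set (Set X)) → Set (Set X),
    (∀ h, σ h ∈ 𝒜) ∧
    ∀ play : ℕ → Set (Set X),
      (∀ n, play n ⊆ σ (List.ofFn fun i : Fin n => play i.1) ∧ (play n).Finite) →
      (⋃ n, play n) ∉ ℬ

/-- The winning condition in the `𝔅ˢ`-Hurewicz game / property: every `B ∈ 𝔅` is
eventually `δ`-enlarged into some member of `𝒱ₙ`. -/
def HurSel (𝔅 : BornologyOn X) (𝒱 : ℕ → Set (Set X)) : Prop :=
  ∀ B ∈ 𝔅.sets, ∃ n₀, ∀ n ≥ n₀, ∃ δ > 0, ∃ U ∈ 𝒱 n, enlarge B δ ⊆ U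

/-- The strong `𝔅`-Hurewicz property. -/
def BsHurewicz (𝔅 : BornologyOn X) : Prop :=
  ∀ 𝒰 : ℕ → Set (Set X), (∀ n, 𝒰 n ∈ OBs 𝔅) →
    ∃ 𝒱 : ℕ → Set (Set X), (∀ n, 𝒱 n ⊆ 𝒰 n ∧ (𝒱 n).Finite) ∧ HurSel 𝔅 𝒱

/-- ONE has a winning strategy in the `𝔅ˢ`-Hurewicz game. -/
def OneWinsHurewicz (𝔅 : BornologyOn X) : Prop :=
  ∃ σ : List (Set (Set X)) → Set (Set X),
    (∀ h, σ h ∈ OBs 𝔅) ∧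
    ∀ play : ℕ → Set (Set X),
      (∀ n, play n ⊆ σ (List.ofFn fun i : Fin n => play i.1) ∧ (play n).Finite) →
      ¬ HurSel 𝔅 play

/-- A `𝔅ˢ`-groupable cover. -/
def BsGroupable (𝔅 : BornologyOn X) (𝒰 : Set (Set X)) : Prop :=
  ∃ 𝒢 : ℕ → Set (Set X), (∀ n, (𝒢 n).Finite) ∧
    (∀ m n, m ≠ n → Disjoint (𝒢 m) (𝒢 n)) ∧ (⋃ n, 𝒢 n) = 𝒰 ∧ HurSel 𝔅 𝒢

/-- The family `𝒪_{𝔅ˢ}^{gp}` of `𝔅ˢ`-groupable open covers. -/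
def OBsgp (𝔅 : BornologyOn X) : Set (Set (Set X)) :=
  {𝒰 | IsOpenCover 𝒰 ∧ BsGroupable 𝔅 𝒰}

/-- The basic `τ_𝔅ˢ` neighbourhood `[B, ε]ˢ(f)` in `C(X)`. -/
def sball (f : C(X, ℝ)) (B : Set X) (ε : ℝ) : Set C(X, ℝ) :=
  {g | ∃ δ > 0, ∀ x ∈ enlarge B δ, |f x - g x| < ε}

/-- The topology `τ_𝔅ˢ` of strong uniform convergence on `𝔅` on `C(X)`. -/
def tauBs (𝔅 : BornologyOn X) : TopologicalSpace C(X, ℝ) :=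
  TopologicalSpace.generateFrom
    {S | ∃ f : C(X, ℝ), ∃ B ∈ 𝔅.sets, ∃ ε > 0, S = sball f B ε}

/-- Countable `T`-tightness of a topological space. -/
def CountableTTightness {Y : Type*} (t : TopologicalSpace Y) : Prop :=
  ∀ ρ : Cardinal.{0}, ρ.IsRegular → Cardinal.aleph0 < ρ →
    ∀ A : Ordinal.{0} → Set Y, (∀ α β, α ≤ β → A α ⊆ A β) →
      (∀ α, α < ρ.ord → @IsClosed _ t (A α)) →
      @IsClosed _ t (⋃ α ∈ {α | α < ρ.ord}, A α)

/-!
Finitely many conditions that each hold for all large indices hold simultaneously for all large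
indices; this applies also to `∃ δ > 0, B^δ ⊆ U`, an eventual condition as `δ → 0⁺` because
enlargements grow with `δ`. The range of the diagonal intersections stays infinite: every value
other than `X` misses a point, which lies in all but finitely many of the intersections, so a
finite range would force the intersections, and with them the members of the first cover, to be
eventually `X`.
-/

theorem BornologyOn.singleton_mem (𝔅 : BornologyOn X) (x : X) : {x} ∈ 𝔅.sets := by
  obtain ⟨A, hA, hxA⟩ := 𝔅.covers x
  exact 𝔅.subset_mem hA (singleton_subset_iff.mpr hxA)

section Enlarge

variable {B S : Set X}

theorem enlarge_mono {δ ε : ℝ} (h : δ ≤ ε) : enlarge B δ ⊆ enlarge B ε :=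
  iUnion₂_mono fun _ _ => ball_subset_ball h

theorem subset_enlarge {δ : ℝ} (hδ : 0 < δ) : B ⊆ enlarge B δ :=
  fun _ hx => mem_biUnion hx (mem_ball_self hδ)

open Topology in
theorem exists_enlarge_subset_iff_eventually :
    (∃ δ > 0, enlarge B δ ⊆ S) ↔ ∀ᶠ δ in 𝓝[>] 0, enlarge B δ ⊆ S := by
  constructor
  · rintro ⟨δ, hδ, hS⟩
    filter_upwards [Ioo_mem_nhdsGT hδ] with ε hε
    exact (enlarge_mono hε.2.le).trans hS
  · intro h
    obtain ⟨δ, hS, hδ⟩ := (h.and self_mem_nhdsWithin).exists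
    exact ⟨δ, hδ, hS⟩

theorem exists_enlarge_subset_iInter {ι : Type*} [Finite ι] {S : ι → Set X}
    (h : ∀ i, ∃ δ > 0, enlarge B δ ⊆ S i) : ∃ δ > 0, enlarge B δ ⊆ ⋂ i, S i := by
  rw [exists_enlarge_subset_iff_eventually]
  simp only [subset_iInter_iff]
  exact eventually_all.mpr fun i => exists_enlarge_subset_iff_eventually.mp (h i)

end Enlarge

theorem finite_range_of_eventually_eq_cofinite {ι α : Type*} {W : ι → α} {a : α}
    (h : ∀ᶠ k in cofinite, W k = a) : (range W).Finite := by
  refine (((eventually_cofinite.mp h).image W).insert a).subset ?_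
  rintro _ ⟨k, rfl⟩
  by_cases hk : W k = a
  · exact hk ▸ mem_insert _ _
  · exact mem_insert_of_mem _ ⟨k, hk, rfl⟩

theorem eventually_eq_univ_of_finite_range {ι α : Type*} {l : Filter ι} {V : ι → Set α}
    (hV : (range V).Finite) (hmem : ∀ x, ∀ᶠ k in l, x ∈ V k) : ∀ᶠ k in l, V k = univ := by
  have hne : ∀ W ∈ range V \ {univ}, ∀ᶠ k in l, V k ≠ W := by
    rintro W ⟨-, hW⟩
    obtain ⟨x, hx⟩ := ne_univ_iff_exists_notMem W |>.mp hW
    exact (hmem x).mono fun k hk heq => hx (heq ▸ hk)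
  filter_upwards [(eventually_all_finite (hV.sdiff (t := {univ}))).mpr hne] with k hk
  by_contra hk_univ
  exact hk (V k) ⟨mem_range_self k, hk_univ⟩ rfl

theorem infinite_range_of_subset {α : Type*} {V W : ℕ → Set α} (hVW : ∀ k, V k ⊆ W k)
    (hW : (range W).Infinite) (hV : ∀ x, ∀ᶠ k in atTop, x ∈ V k) : (range V).Infinite := by
  intro hV_fin
  refine hW (finite_range_of_eventually_eq_cofinite (a := univ) ?_)
  rw [Nat.cofinite_eq_atTop]
  exact (eventually_eq_univ_of_finite_range hV_fin hV).mono fun k hk =>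
    univ_subset_iff.mp (hk ▸ hVW k)

namespace IsGammaBSeq

variable {𝔅 : BornologyOn X}

theorem eventually_enlarge_subset {U : ℕ → Set X} (h : IsGammaBSeq 𝔅 U) {B : Set X}
    (hB : B ∈ 𝔅.sets) : ∀ᶠ k in atTop, ∃ δ > 0, enlarge B δ ⊆ U k :=
  eventually_atTop.mpr (h.2.2 B hB)

theorem eventually_mem {U : ℕ → Set X} (h : IsGammaBSeq 𝔅 U) (x : X) :
    ∀ᶠ k in atTop, x ∈ U k :=
  (h.eventually_enlarge_subset (𝔅.singleton_mem x)).mono fun _ ⟨_, hδ, hU⟩ =>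
    hU (subset_enlarge hδ rfl)

theorem iInter {ι : Type*} [Finite ι] [Nonempty ι] {U : ι → ℕ → Set X}
    (hU : ∀ i, IsGammaBSeq 𝔅 (U i)) : IsGammaBSeq 𝔅 fun k => ⋂ i, U i k := by
  obtain ⟨i₀⟩ := ‹Nonempty ι›
  refine ⟨?_, fun k => isOpen_iInter_of_finite fun i => (hU i).2.1 k, fun B hB => ?_⟩
  · refine infinite_range_of_subset (fun k => iInter_subset _ i₀) (hU i₀).1 fun x => ?_
    exact (eventually_all.mpr fun i => (hU i).eventually_mem x).mono fun _ => mem_iInter.mpr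
  · refine eventually_atTop.mp ?_
    exact (eventually_all.mpr fun i => (hU i).eventually_enlarge_subset hB).mono fun _ =>
      exists_enlarge_subset_iInter

end IsGammaBSeq

theorem stmt4_general (𝔅 : BornologyOn X)
    (U : ℕ → ℕ → Set X) (hU : ∀ n, IsGammaBSeq 𝔅 (U n)) :
    ∀ n : ℕ, IsGammaBSeq 𝔅 (fun k => ⋂ i : Fin (n + 1), U i.1 k) :=
  fun _ => IsGammaBSeq.iInter fun i => hU i.1

theorem stmt4 (𝔅 : BornologyOn X) (hcb : HasClosedBase 𝔅)
    (U : ℕ → ℕ → Set X) (hU : ∀ n, IsGammaBSeq 𝔅 (U n)) :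
    ∀ n : ℕ, IsGammaBSeq 𝔅 (fun k => ⋂ i : Fin (n + 1), U i.1 k) :=
  stmt4_general 𝔅 U hU
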